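/- arXiv:2512.22038 — 4 statements merged into one kernel-verified Lean document; each statement's English description precedes it below -/
import Mathlib

section
/- Let r ∈ (0,1) and β² > 0. The function h(K) = (r² + K(1−r²)) / √(r² + K²(β² + 2(1−r²))) on (0, ∞) attains its unique global maximum at K*(r) = (1−r²)/(2(1−r²) + β²), and the maximal value is √(r² + (1−r²)²/(β² + 2(1−r²))). -/
/-- For `r ∈ (0,1)` and `β² > 0`, the function
`h(K) = (r² + K(1−r²))/√(r² + K²(β² + 2(1−r²)))` on `(0,∞)` attains its
unique global maximum at `K*(r) = (1−r²)/(2(1−r²) + β²)`, with maximal value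
`√(r² + (1−r²)²/(β² + 2(1−r²)))`. -/
theorem optimal_gain_unique_max
    (r β : ℝ) (hr0 : 0 < r) (hr1 : r < 1) (hβ : 0 < β ^ 2) :
    letI h : ℝ → ℝ := fun K =>
      (r ^ 2 + K * (1 - r ^ 2)) / Real.sqrt (r ^ 2 + K ^ 2 * (β ^ 2 + 2 * (1 - r ^ 2)))
    letI Kstar : ℝ := (1 - r ^ 2) / (2 * (1 - r ^ 2) + β ^ 2)
    0 < Kstar ∧
    h Kstar = Real.sqrt (r ^ 2 + (1 - r ^ 2) ^ 2 / (β ^ 2 + 2 * (1 - r ^ 2))) ∧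
    (∀ K : ℝ, 0 < K → h K ≤ h Kstar) ∧
    (∀ K : ℝ, 0 < K → K ≠ Kstar → h K < h Kstar) := by
  dsimp only
  set Kstar : ℝ := (1 - r ^ 2) / (2 * (1 - r ^ 2) + β ^ 2) with hKdef
  have ha : 0 < r ^ 2 := by positivity
  have hc : 0 < 1 - r ^ 2 := by nlinarith
  have hb : 0 < β ^ 2 + 2 * (1 - r ^ 2) := by nlinarith
  have hb' : 0 < 2 * (1 - r ^ 2) + β ^ 2 := by nlinarith
  have hKs : 0 < Kstar := div_pos hc hb'
  set m : ℝ := r ^ 2 + (1 - r ^ 2) ^ 2 / (β ^ 2 + 2 * (1 - r ^ 2)) with hm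
  have hm0 : 0 < m := by positivity
  clear_value Kstar m
  have hnum : r ^ 2 + Kstar * (1 - r ^ 2) = m := by
    rw [hKdef, hm]; field_simp; ring
  have hden : r ^ 2 + Kstar ^ 2 * (β ^ 2 + 2 * (1 - r ^ 2)) = m := by
    rw [hKdef, hm]; field_simp; ring
  have hKsval : (r ^ 2 + Kstar * (1 - r ^ 2)) /
      Real.sqrt (r ^ 2 + Kstar ^ 2 * (β ^ 2 + 2 * (1 - r ^ 2))) = Real.sqrt m := by
    rw [hnum, hden, Real.div_sqrt]
  -- key algebraic identity
  have diff : ∀ K : ℝ,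
      m * (r ^ 2 + K ^ 2 * (β ^ 2 + 2 * (1 - r ^ 2)))
        - (r ^ 2 + K * (1 - r ^ 2)) ^ 2
      = (r ^ 2 / (β ^ 2 + 2 * (1 - r ^ 2)))
          * (K * (β ^ 2 + 2 * (1 - r ^ 2)) - (1 - r ^ 2)) ^ 2 := by
    intro K
    rw [hm]
    field_simp
    ring
  have hDpos : ∀ K : ℝ, 0 < r ^ 2 + K ^ 2 * (β ^ 2 + 2 * (1 - r ^ 2)) := by
    intro K; positivity
  have hsqrtD : ∀ K : ℝ, 0 < Real.sqrt (r ^ 2 + K ^ 2 * (β ^ 2 + 2 * (1 - r ^ 2))) :=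
    fun K => Real.sqrt_pos.mpr (hDpos K)
  have hNpos : ∀ K : ℝ, 0 < K → 0 < r ^ 2 + K * (1 - r ^ 2) := by
    intro K hK; have := mul_pos hK hc; linarith
  have hle : ∀ K : ℝ, 0 < K →
      (r ^ 2 + K * (1 - r ^ 2)) /
        Real.sqrt (r ^ 2 + K ^ 2 * (β ^ 2 + 2 * (1 - r ^ 2))) ≤ Real.sqrt m := by
    intro K hK
    rw [div_le_iff₀ (hsqrtD K), ← Real.sqrt_mul hm0.le]
    rw [Real.le_sqrt (hNpos K hK).le]
    have := mul_nonneg (div_pos ha hb).le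
      (sq_nonneg (K * (β ^ 2 + 2 * (1 - r ^ 2)) - (1 - r ^ 2)))
    linarith [diff K]
    exact mul_nonneg hm0.le (hDpos K).le
  have hlt : ∀ K : ℝ, 0 < K → K ≠ Kstar →
      (r ^ 2 + K * (1 - r ^ 2)) /
        Real.sqrt (r ^ 2 + K ^ 2 * (β ^ 2 + 2 * (1 - r ^ 2))) < Real.sqrt m := by
    intro K hK hne
    rw [div_lt_iff₀ (hsqrtD K), ← Real.sqrt_mul hm0.le]
    rw [show (r ^ 2 + K * (1 - r ^ 2)) = Real.sqrt ((r ^ 2 + K * (1 - r ^ 2)) ^ 2) from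
      (Real.sqrt_sq (hNpos K hK).le).symm]
    apply Real.sqrt_lt_sqrt (by positivity)
    have hz : K * (β ^ 2 + 2 * (1 - r ^ 2)) - (1 - r ^ 2) ≠ 0 := by
      intro hzero
      apply hne
      rw [hKdef]
      field_simp
      linarith
    have hz2 : 0 < (K * (β ^ 2 + 2 * (1 - r ^ 2)) - (1 - r ^ 2)) ^ 2 :=
      lt_of_le_of_ne (sq_nonneg _) (Ne.symm (pow_ne_zero 2 hz))
    have := mul_pos (div_pos ha hb) hz2
    linarith [diff K]
  refine ⟨hKs, hKsval, ?_, ?_⟩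
  · intro K hK; rw [hKsval]; exact hle K hK
  · intro K hK hne; rw [hKsval]; exact hlt K hK hne
end

section
/- For every r ∈ (0,1), K > 0, σ > 0, η ∈ [0,1), β² > 0 and λ ∈ (0,1), the one-step transition satisfies |Ψ(r, K, η, σ)| ≤ Φ(r), where Φ(r) = λ·√(r² + (1−r²)²/(β² + 2(1−r²))). -/
/-- The pre-scaling variance `Λ²(r,K,η,σ)` of the rating update
(observation-noise standard deviation `β`). -/
noncomputable def Lam2 (β r K η σ : ℝ) : ℝ :=
  σ ^ 2 * ((1 - K) ^ 2 + K ^ 2 + 2 * K * (1 - K) * η)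
    + K ^ 2 * (β ^ 2 + 2 * (1 - η * r ^ 2))
    + 2 * K * (1 - K) * (1 - η) * r * σ
    - 2 * K ^ 2 * (1 - η) * r * σ

/-- The one-step accuracy transition function
`Ψ(r,K,η,σ) = λ[rσ(1 − K(1−η)) + K(1 − ηr²)]/√(Λ²(r,K,η,σ))`. -/
noncomputable def Psi (lam β r K η σ : ℝ) : ℝ :=
  lam * (r * σ * (1 - K * (1 - η)) + K * (1 - η * r ^ 2))
    / Real.sqrt (Lam2 β r K η σ)

/-- The invariant one-step accuracy map
`Φ(r) = λ√(r² + (1−r²)²/(β² + 2(1−r²)))`. -/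
noncomputable def Phi (lam β r : ℝ) : ℝ :=
  lam * Real.sqrt (r ^ 2 + (1 - r ^ 2) ^ 2 / (β ^ 2 + 2 * (1 - r ^ 2)))

/-!
Both the numerator and the variance are read off the gain vector `x = (1 - K, K)`: the numerator
is `c ⬝ x` for a fixed vector `c`, and `Λ² = xᵀ G x` for a positive definite Gram matrix `G`.
Cauchy–Schwarz in the metric of `G` gives `(c ⬝ x)² ≤ (cᵀ G⁻¹ c) Λ²`, and `cᵀ G⁻¹ c` falls short of
`Φ(r)² / λ²` by a multiple of `(1 - η²)(σ - r)²`.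
-/

def quadForm2 (a b c x y : ℝ) : ℝ := a * x ^ 2 + 2 * b * x * y + c * y ^ 2

theorem det_mul_sq_le_quadForm2_mul_quadForm2_adj (a b c x y u v : ℝ) :
    (a * c - b ^ 2) * (u * x + v * y) ^ 2 ≤ quadForm2 a b c x y * quadForm2 c (-b) a u v := by
  have lagrange : quadForm2 a b c x y * quadForm2 c (-b) a u v
      - (a * c - b ^ 2) * (u * x + v * y) ^ 2
      = (v * (a * x + b * y) - u * (b * x + c * y)) ^ 2 := by
    unfold quadForm2; ring
  linarith [sq_nonneg (v * (a * x + b * y) - u * (b * x + c * y))]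

theorem quadForm2_nonneg {a b c : ℝ} (ha : 0 < a) (hdet : 0 ≤ a * c - b ^ 2) (x y : ℝ) :
    0 ≤ quadForm2 a b c x y := by
  have complete_square :
      a * quadForm2 a b c x y = (a * x + b * y) ^ 2 + (a * c - b ^ 2) * y ^ 2 := by
    unfold quadForm2; ring
  refine nonneg_of_mul_nonneg_right ?_ ha
  rw [complete_square]
  positivity

theorem abs_div_sqrt_le_sqrt_of_sq_le_mul {a m L : ℝ} (hL : 0 ≤ L) (h : a ^ 2 ≤ m * L) :
    |a / √L| ≤ √m := by
  rw [abs_div, abs_of_nonneg (Real.sqrt_nonneg L)]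
  refine div_le_of_le_mul₀ (Real.sqrt_nonneg L) (Real.sqrt_nonneg m) ?_
  rw [← Real.sqrt_sq_eq_abs, ← Real.sqrt_mul' m hL]
  exact Real.sqrt_le_sqrt h

section Gram

variable (β r η σ : ℝ)

def gram12 : ℝ := η * σ ^ 2 + (1 - η) * r * σ

def gram22 : ℝ := σ ^ 2 + β ^ 2 + 2 * (1 - η * r ^ 2) - 2 * (1 - η) * r * σ

theorem Lam2_eq_quadForm2 (K : ℝ) :
    Lam2 β r K η σ = quadForm2 (σ ^ 2) (gram12 r η σ) (gram22 β r η σ) (1 - K) K := by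
  unfold Lam2 quadForm2 gram12 gram22; ring

theorem gram_det_eq :
    σ ^ 2 * gram22 β r η σ - gram12 r η σ ^ 2
      = σ ^ 2 * (β ^ 2 + 2 * (1 - r ^ 2) + (1 - η ^ 2) * (σ - r) ^ 2) := by
  unfold gram12 gram22; ring

theorem quadForm2_adj_add_defect_eq :
    (β ^ 2 + 2 * (1 - r ^ 2))
        * quadForm2 (gram22 β r η σ) (-gram12 r η σ) (σ ^ 2) (r * σ) (η * r * σ + 1 - η * r ^ 2)
      + (1 - η ^ 2) * (1 - r ^ 2) ^ 2 * σ ^ 2 * (σ - r) ^ 2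
      = (r ^ 2 * (β ^ 2 + 2 * (1 - r ^ 2)) + (1 - r ^ 2) ^ 2)
        * (σ ^ 2 * gram22 β r η σ - gram12 r η σ ^ 2) := by
  unfold quadForm2 gram12 gram22; ring

end Gram

section Bound

variable {β r η σ : ℝ} (hσ : σ ≠ 0) (hη : η ^ 2 ≤ 1) (hD : 0 < β ^ 2 + 2 * (1 - r ^ 2))
include hσ hη hD

theorem gram_det_pos : 0 < σ ^ 2 * gram22 β r η σ - gram12 r η σ ^ 2 := by
  rw [gram_det_eq]
  have : 0 ≤ (1 - η ^ 2) * (σ - r) ^ 2 := mul_nonneg (by linarith) (sq_nonneg _)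
  positivity

theorem Lam2_nonneg (K : ℝ) : 0 ≤ Lam2 β r K η σ := by
  rw [Lam2_eq_quadForm2]
  exact quadForm2_nonneg (by positivity) (gram_det_pos hσ hη hD).le _ _

theorem sq_numerator_le_mul_Lam2 (K : ℝ) :
    (r * σ * (1 - K * (1 - η)) + K * (1 - η * r ^ 2)) ^ 2
      ≤ (r ^ 2 + (1 - r ^ 2) ^ 2 / (β ^ 2 + 2 * (1 - r ^ 2))) * Lam2 β r K η σ := by
  set D := β ^ 2 + 2 * (1 - r ^ 2)
  set Δ := σ ^ 2 * gram22 β r η σ - gram12 r η σ ^ 2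
  have hΔ : 0 < Δ := gram_det_pos hσ hη hD
  have hL := Lam2_nonneg hσ hη hD K
  have cauchy_schwarz := det_mul_sq_le_quadForm2_mul_quadForm2_adj (σ ^ 2) (gram12 r η σ)
    (gram22 β r η σ) (1 - K) K (r * σ) (η * r * σ + 1 - η * r ^ 2)
  rw [← Lam2_eq_quadForm2] at cauchy_schwarz
  have adj_le : D * quadForm2 (gram22 β r η σ) (-gram12 r η σ) (σ ^ 2) (r * σ)
      (η * r * σ + 1 - η * r ^ 2) ≤ (r ^ 2 * D + (1 - r ^ 2) ^ 2) * Δ := by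
    rw [← quadForm2_adj_add_defect_eq]
    have : 0 ≤ (1 - η ^ 2) * (1 - r ^ 2) ^ 2 * σ ^ 2 * (σ - r) ^ 2 := by
      have : 0 ≤ 1 - η ^ 2 := by linarith
      positivity
    linarith
  have hnum : r * σ * (1 - K * (1 - η)) + K * (1 - η * r ^ 2)
      = r * σ * (1 - K) + (η * r * σ + 1 - η * r ^ 2) * K := by ring
  rw [hnum, show r ^ 2 + (1 - r ^ 2) ^ 2 / D = (r ^ 2 * D + (1 - r ^ 2) ^ 2) / D by
    field_simp, div_mul_eq_mul_div, le_div_iff₀ hD]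
  refine le_of_mul_le_mul_left ?_ hΔ
  calc Δ * ((r * σ * (1 - K) + (η * r * σ + 1 - η * r ^ 2) * K) ^ 2 * D)
      ≤ Lam2 β r K η σ * (D * quadForm2 (gram22 β r η σ) (-gram12 r η σ) (σ ^ 2) (r * σ)
          (η * r * σ + 1 - η * r ^ 2)) := by
        nlinarith [mul_le_mul_of_nonneg_right cauchy_schwarz hD.le]
    _ ≤ Lam2 β r K η σ * ((r ^ 2 * D + (1 - r ^ 2) ^ 2) * Δ) := by gcongr
    _ = Δ * ((r ^ 2 * D + (1 - r ^ 2) ^ 2) * Lam2 β r K η σ) := by ring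

end Bound

theorem abs_Psi_le_Phi_general
    (r K σ η β lam : ℝ) (hr0 : 0 < r) (hr1 : r < 1) (hσ : 0 < σ)
    (hη0 : 0 ≤ η) (hη1 : η < 1) (hβ : 0 < β ^ 2)
    (hlam0 : 0 < lam) :
    |Psi lam β r K η σ| ≤ Phi lam β r := by
  have hη : η ^ 2 ≤ 1 := by nlinarith
  have hD : 0 < β ^ 2 + 2 * (1 - r ^ 2) := by nlinarith
  have key := sq_numerator_le_mul_Lam2 hσ.ne' hη hD K
  rw [Psi, Phi, mul_div_assoc, abs_mul, abs_of_pos hlam0]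
  exact mul_le_mul_of_nonneg_left
    (abs_div_sqrt_le_sqrt_of_sq_le_mul (Lam2_nonneg hσ.ne' hη hD K) key) hlam0.le

/-- For every `r ∈ (0,1)`, `K > 0`, `σ > 0`, `η ∈ [0,1)`,
`β² > 0` and `λ ∈ (0,1)`, the one-step transition satisfies
`|Ψ(r,K,η,σ)| ≤ Φ(r)`. -/
theorem abs_Psi_le_Phi
    (r K σ η β lam : ℝ) (hr0 : 0 < r) (hr1 : r < 1) (hK : 0 < K) (hσ : 0 < σ)
    (hη0 : 0 ≤ η) (hη1 : η < 1) (hβ : 0 < β ^ 2)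
    (hlam0 : 0 < lam) (hlam1 : lam < 1) :
    |Psi lam β r K η σ| ≤ Phi lam β r :=
  abs_Psi_le_Phi_general r K σ η β lam hr0 hr1 hσ hη0 hη1 hβ hlam0
end

section
/- (Matchmaking phase transition.) Let κ > 0 and r > 0, and define C(η) = κ(1/(1−η) − 1) for η ∈ [0,1) and J(η) = η r² − C(η). Then J is strictly concave on [0,1) and its unique maximizer over [0,1) is η*(r) = max(0, 1 − √κ / r). In particular η*(r) = 0 whenever r ≤ √κ, and η*(r) = 1 − √κ/r ∈ (0,1) whenever r > √κ. -/
/-!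
Writing `u = 1 - η`, the welfare is `J(η) = r² + κ - (r²u + κ/u)`, and completing the square gives
`r²u + κ/u = 2r√κ + (ru - √κ)²/u`. Hence `J ≤ (r - √κ)²`, with equality exactly at `u = √κ/r`,
which is admissible iff `r > √κ`. When `r ≤ √κ`, `J(η) = η(r²(1 - η) - κ)/(1 - η) < 0 = J(0)`
for every `η ∈ (0,1)`. Strict concavity is that of `u ↦ 1/u` on `(0, ∞)`.
-/

open Set

noncomputable section

def matchingCost (κ η : ℝ) : ℝ := κ * (1 / (1 - η) - 1)

def matchingWelfare (κ r η : ℝ) : ℝ := η * r ^ 2 - matchingCost κ η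

def optimalIntensity (κ r : ℝ) : ℝ := max 0 (1 - √κ / r)

end

theorem strictConvexOn_matchingCost {κ : ℝ} (hκ : 0 < κ) :
    StrictConvexOn ℝ (Iio 1) (matchingCost κ) := by
  refine ⟨convex_Iio 1, fun x hx y hy hxy a b ha hb hab => ?_⟩
  have hinv := (strictConvexOn_zpow (m := -1) (by decide) (by decide)).2
    (show 1 - x ∈ Ioi 0 from mem_Ioi.2 (sub_pos.2 hx))
    (show 1 - y ∈ Ioi 0 from mem_Ioi.2 (sub_pos.2 hy))
    (by simpa using hxy) ha hb hab
  simp only [zpow_neg_one, smul_eq_mul] at hinv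
  have hcomb : a * (1 - x) + b * (1 - y) = 1 - (a * x + b * y) := by
    linear_combination hab
  rw [hcomb] at hinv
  simp only [matchingCost, smul_eq_mul, one_div]
  have := mul_lt_mul_of_pos_left hinv hκ
  linear_combination this + κ * hab

theorem strictConcaveOn_matchingWelfare {κ : ℝ} (hκ : 0 < κ) (r : ℝ) :
    StrictConcaveOn ℝ (Iio 1) (matchingWelfare κ r) :=
  (((concaveOn_id (convex_Iio 1)).smul (sq_nonneg r)).congr fun η _ => by
      simp [mul_comm]).sub_strictConvexOn (strictConvexOn_matchingCost hκ)

theorem matchingWelfare_add_sq_div {κ : ℝ} (hκ : 0 ≤ κ) (r : ℝ) {η : ℝ} (hη : η ≠ 1) :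
    matchingWelfare κ r η + (r * (1 - η) - √κ) ^ 2 / (1 - η) = (r - √κ) ^ 2 := by
  have hη' : 1 - η ≠ 0 := sub_ne_zero.2 hη.symm
  have hκsq : √κ ^ 2 = κ := Real.sq_sqrt hκ
  simp only [matchingWelfare, matchingCost]
  field_simp
  linear_combination η * hκsq

theorem matchingWelfare_lt_one_sub_sqrt_div {κ r η : ℝ} (hκ : 0 < κ) (hr : 0 < r) (hη : η < 1)
    (hne : η ≠ 1 - √κ / r) : matchingWelfare κ r η < matchingWelfare κ r (1 - √κ / r) := by
  have hgap : r * (1 - η) - √κ ≠ 0 := by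
    contrapose! hne
    field_simp
    linarith
  have hη' : 0 < 1 - η := sub_pos.2 hη
  have hstar : 1 - √κ / r ≠ 1 := by
    simpa using (div_pos (Real.sqrt_pos.2 hκ) hr).ne'
  have hat := matchingWelfare_add_sq_div hκ.le r hη.ne
  have hatstar := matchingWelfare_add_sq_div hκ.le r hstar
  rw [sub_sub_cancel, mul_div_cancel₀ _ hr.ne', sub_self, zero_pow two_ne_zero, zero_div,
    add_zero] at hatstar
  have : 0 < (r * (1 - η) - √κ) ^ 2 / (1 - η) := by positivity
  linarith

theorem matchingWelfare_neg {κ r η : ℝ} (hκ : 0 < κ) (hrκ : r ^ 2 ≤ κ) (hη₀ : 0 < η)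
    (hη₁ : η < 1) : matchingWelfare κ r η < 0 := by
  have hη' : 0 < 1 - η := sub_pos.2 hη₁
  have hcost : matchingCost κ η = κ * η / (1 - η) := by
    simp only [matchingCost]
    field_simp
    ring
  rw [matchingWelfare, hcost, sub_neg, lt_div_iff₀ hη']
  nlinarith [mul_le_mul_of_nonneg_left hrκ (mul_nonneg hη₀.le hη'.le),
    mul_pos (mul_pos hκ hη₀) hη₀]

theorem matchingWelfare_zero (κ r : ℝ) : matchingWelfare κ r 0 = 0 := by
  simp [matchingWelfare, matchingCost]

theorem optimalIntensity_eq_zero {κ r : ℝ} (hr : 0 < r) (h : r ≤ √κ) :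
    optimalIntensity κ r = 0 :=
  max_eq_left (sub_nonpos.2 ((one_le_div hr).2 h))

theorem optimalIntensity_eq {κ r : ℝ} (hr : 0 < r) (h : √κ < r) :
    optimalIntensity κ r = 1 - √κ / r :=
  max_eq_right (sub_nonneg.2 ((div_lt_one hr).2 h).le)

theorem optimalIntensity_pos {κ r : ℝ} (hr : 0 < r) (h : √κ < r) : 0 < optimalIntensity κ r :=
  lt_max_of_lt_right (sub_pos.2 ((div_lt_one hr).2 h))

theorem optimalIntensity_mem_Ico {κ r : ℝ} (hκ : 0 < κ) (hr : 0 < r) :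
    optimalIntensity κ r ∈ Ico 0 1 :=
  ⟨le_max_left _ _, max_lt one_pos (sub_lt_self _ (div_pos (Real.sqrt_pos.2 hκ) hr))⟩

theorem matchingWelfare_lt_optimalIntensity {κ r η : ℝ} (hκ : 0 < κ) (hr : 0 < r)
    (hη : η ∈ Ico 0 1) (hne : η ≠ optimalIntensity κ r) :
    matchingWelfare κ r η < matchingWelfare κ r (optimalIntensity κ r) := by
  rcases le_or_gt r √κ with h | h
  · rw [optimalIntensity_eq_zero hr h] at hne ⊢
    have hrκ : r ^ 2 ≤ κ := Real.le_sqrt' hr |>.1 h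
    rw [matchingWelfare_zero]
    exact matchingWelfare_neg hκ hrκ (hη.1.lt_of_ne' hne) hη.2
  · rw [optimalIntensity_eq hr h] at hne ⊢
    exact matchingWelfare_lt_one_sub_sqrt_div hκ hr hη.2 hne

/-- **Matchmaking phase transition.** Let `κ > 0`, `r > 0`,
`C(η) = κ(1/(1−η) − 1)` and `J(η) = ηr² − C(η)` on `[0,1)`. Then `J` is
strictly concave on `[0,1)` and its unique maximizer over `[0,1)` is
`η*(r) = max(0, 1 − √κ/r)`; in particular `η* = 0` when `r ≤ √κ`, and
`η* = 1 − √κ/r ∈ (0,1)` when `r > √κ`. -/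
theorem matchmaking_phase_transition
    (κ r : ℝ) (hκ : 0 < κ) (hr : 0 < r) :
    letI J : ℝ → ℝ := fun η => η * r ^ 2 - κ * (1 / (1 - η) - 1)
    letI ηstar : ℝ := max 0 (1 - Real.sqrt κ / r)
    StrictConcaveOn ℝ (Set.Ico 0 1) J ∧
    ηstar ∈ Set.Ico (0 : ℝ) 1 ∧
    (∀ η ∈ Set.Ico (0 : ℝ) 1, η ≠ ηstar → J η < J ηstar) ∧
    (r ≤ Real.sqrt κ → ηstar = 0) ∧
    (Real.sqrt κ < r →
      ηstar = 1 - Real.sqrt κ / r ∧ 0 < ηstar ∧ ηstar < 1) :=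
  ⟨(strictConcaveOn_matchingWelfare hκ r).subset Ico_subset_Iio_self (convex_Ico 0 1),
    optimalIntensity_mem_Ico hκ hr,
    fun _ hη hne => matchingWelfare_lt_optimalIntensity hκ hr hη hne,
    optimalIntensity_eq_zero hr,
    fun h => ⟨optimalIntensity_eq hr h, optimalIntensity_pos hr h,
      (optimalIntensity_mem_Ico hκ hr).2⟩⟩
end

section
/- (Separation of filtering and matching.) Let λ ∈ (0,1), β² > 0, δ ∈ (0,1), and let C : [0,1) → [0,∞) be convex, nondecreasing, with C(0) = 0 and C(η) → +∞ as η → 1⁻. Let Ψ and Φ be the transition function and the invariant map, and V(r) = sup_{η∈[0,1)}(η r² − C(η)). Fix r₀ ∈ (0,1). For any sequences K_t > 0, σ_t > 0, η_t ∈ [0,1) (t ≥ 0) with induced states r_{t+1} = Ψ(r_t, K_t, η_t, σ_t), the discounted welfare satisfies Σ_{t≥0} δ^t (η_t r_t² − C(η_t)) ≤ Σ_{t≥0} δ^t V(r̄_t), where r̄₀ = r₀ and r̄_{t+1} = Φ(r̄_t). Moreover this upper bound is attained by the separated policy K_t = (1−r̄_t²)/(2(1−r̄_t²)+β²), σ_t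 = r̄_t, and η_t any maximizer of η ↦ η r̄_t² − C(η) over [0,1). -/
open Set

noncomputable def phiRadicand (β r : ℝ) : ℝ :=
  r ^ 2 + (1 - r ^ 2) ^ 2 / (β ^ 2 + 2 * (1 - r ^ 2))

lemma Phi_eq (lam β r : ℝ) : Phi lam β r = lam * √(phiRadicand β r) := rfl

lemma sq_mul_add_mul_le {D : ℝ} (hD : 0 < D) (a b k c : ℝ) :
    (a * b + k * c) ^ 2 ≤ (a ^ 2 + k ^ 2 * D) * (b ^ 2 + c ^ 2 / D) := by
  rw [← sub_nonneg]
  have key : (a ^ 2 + k ^ 2 * D) * (b ^ 2 + c ^ 2 / D) - (a * b + k * c) ^ 2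
      = (a * c - k * D * b) ^ 2 / D := by
    field_simp
    ring
  rw [key]
  positivity

section Transition

variable {lam β r K η σ : ℝ}

lemma Lam2_eq (β r K η σ : ℝ) :
    Lam2 β r K η σ = ((1 - K) * σ + K * σ * η + K * r * (1 - η)) ^ 2
      + K ^ 2 * (β ^ 2 + 2 * (1 - r ^ 2)) + K ^ 2 * (σ - r) ^ 2 * (1 - η ^ 2) := by
  unfold Lam2
  ring

lemma Psi_numerator_eq (r K η σ : ℝ) :
    r * σ * (1 - K * (1 - η)) + K * (1 - η * r ^ 2)
      = ((1 - K) * σ + K * σ * η + K * r * (1 - η)) * r + K * (1 - r ^ 2) := by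
  ring

lemma phiDenom_pos (hβ : 0 < β ^ 2) (hr : r ^ 2 ≤ 1) : 0 < β ^ 2 + 2 * (1 - r ^ 2) := by
  linarith

lemma phiRadicand_nonneg (hβ : 0 < β ^ 2) (hr : r ^ 2 ≤ 1) : 0 ≤ phiRadicand β r := by
  have := phiDenom_pos hβ hr
  unfold phiRadicand
  positivity

lemma Psi_numerator_sq_le (hβ : 0 < β ^ 2) (hr : r ^ 2 ≤ 1) (hη : η ^ 2 ≤ 1) :
    (r * σ * (1 - K * (1 - η)) + K * (1 - η * r ^ 2)) ^ 2
      ≤ Lam2 β r K η σ * phiRadicand β r := by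
  set A := (1 - K) * σ + K * σ * η + K * r * (1 - η)
  have hcs := sq_mul_add_mul_le (phiDenom_pos hβ hr) A r K (1 - r ^ 2)
  have hΛ : A ^ 2 + K ^ 2 * (β ^ 2 + 2 * (1 - r ^ 2)) ≤ Lam2 β r K η σ := by
    rw [Lam2_eq]
    have : 0 ≤ K ^ 2 * (σ - r) ^ 2 * (1 - η ^ 2) := by
      have := sub_nonneg.2 hη
      positivity
    linarith
  rw [Psi_numerator_eq]
  exact hcs.trans (mul_le_mul_of_nonneg_right hΛ (phiRadicand_nonneg hβ hr))

theorem abs_Psi_le_Phi_s14 (hlam : 0 ≤ lam) (hβ : 0 < β ^ 2) (hr : r ^ 2 ≤ 1) (hη : η ^ 2 ≤ 1) :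
    |Psi lam β r K η σ| ≤ Phi lam β r := by
  have hN := Real.abs_le_sqrt (Psi_numerator_sq_le (K := K) (σ := σ) hβ hr hη)
  rw [Real.sqrt_mul' _ (phiRadicand_nonneg hβ hr)] at hN
  rw [Psi, Phi_eq, mul_div_assoc, abs_mul, abs_of_nonneg hlam, abs_div,
    abs_of_nonneg (Real.sqrt_nonneg _)]
  refine mul_le_mul_of_nonneg_left
    (div_le_of_le_mul₀ (Real.sqrt_nonneg _) (Real.sqrt_nonneg _) ?_) hlam
  exact hN.trans_eq (mul_comm _ _)

lemma phiRadicand_le_phiRadicand {a b : ℝ} (hβ : 0 < β ^ 2) (hab : a ^ 2 ≤ b ^ 2)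
    (hb : b ^ 2 ≤ 1) : phiRadicand β a ≤ phiRadicand β b := by
  have ha : a ^ 2 ≤ 1 := hab.trans hb
  have hDa := phiDenom_pos hβ ha
  have hDb := phiDenom_pos hβ hb
  unfold phiRadicand
  rw [← sub_nonneg]
  have key : b ^ 2 + (1 - b ^ 2) ^ 2 / (β ^ 2 + 2 * (1 - b ^ 2))
      - (a ^ 2 + (1 - a ^ 2) ^ 2 / (β ^ 2 + 2 * (1 - a ^ 2)))
      = (b ^ 2 - a ^ 2) * (β ^ 2 * β ^ 2 + β ^ 2 * ((1 - a ^ 2) + (1 - b ^ 2))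
          + 2 * (1 - a ^ 2) * (1 - b ^ 2))
        / ((β ^ 2 + 2 * (1 - a ^ 2)) * (β ^ 2 + 2 * (1 - b ^ 2))) := by
    generalize hA : β ^ 2 + 2 * (1 - a ^ 2) = Da at hDa ⊢
    generalize hB : β ^ 2 + 2 * (1 - b ^ 2) = Db at hDb ⊢
    field_simp
    rw [← hA, ← hB]
    ring
  rw [key]
  have := sub_nonneg.2 hab
  have := sub_nonneg.2 ha
  have := sub_nonneg.2 hb
  positivity

theorem Phi_le_Phi {a b : ℝ} (hlam : 0 ≤ lam) (hβ : 0 < β ^ 2) (hab : a ^ 2 ≤ b ^ 2)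
    (hb : b ^ 2 ≤ 1) : Phi lam β a ≤ Phi lam β b :=
  mul_le_mul_of_nonneg_left (Real.sqrt_le_sqrt (phiRadicand_le_phiRadicand hβ hab hb)) hlam

lemma phiRadicand_le_one (hβ : 0 < β ^ 2) (hr : r ^ 2 ≤ 1) : phiRadicand β r ≤ 1 := by
  simpa [phiRadicand] using phiRadicand_le_phiRadicand (b := 1) hβ (by simpa using hr) (by norm_num)

lemma Phi_sq_le_one (hlam0 : 0 ≤ lam) (hlam1 : lam ≤ 1) (hβ : 0 < β ^ 2) (hr : r ^ 2 ≤ 1) :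
    Phi lam β r ^ 2 ≤ 1 := by
  rw [Phi_eq, mul_pow, Real.sq_sqrt (phiRadicand_nonneg hβ hr)]
  have := phiRadicand_le_one hβ hr
  have : lam ^ 2 ≤ 1 := pow_le_one₀ hlam0 hlam1
  nlinarith [phiRadicand_nonneg hβ hr]

lemma sq_Psi_le_sq_Phi (hlam : 0 ≤ lam) (hβ : 0 < β ^ 2) (hη : η ^ 2 ≤ 1) {s : ℝ}
    (hrs : r ^ 2 ≤ s ^ 2) (hs : s ^ 2 ≤ 1) :
    Psi lam β r K η σ ^ 2 ≤ Phi lam β s ^ 2 := by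
  have h := (abs_Psi_le_Phi_s14 (K := K) (σ := σ) hlam hβ (hrs.trans hs) hη).trans
    (Phi_le_Phi hlam hβ hrs hs)
  exact sq_le_sq' (abs_le.1 h).1 (abs_le.1 h).2

/-- At the Kalman gain with `σ = r`, both the numerator of `Ψ` and `Λ²` reduce to
`phiRadicand β r`. -/
theorem Psi_separated (hβ : 0 < β ^ 2) (hr : r ^ 2 ≤ 1) :
    Psi lam β r ((1 - r ^ 2) / (2 * (1 - r ^ 2) + β ^ 2)) η r = Phi lam β r := by
  have hD := phiDenom_pos hβ hr
  set K := (1 - r ^ 2) / (2 * (1 - r ^ 2) + β ^ 2)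
  have hA : (1 - K) * r + K * r * η + K * r * (1 - η) = r := by ring
  have hKD : K * (1 - r ^ 2) = (1 - r ^ 2) ^ 2 / (β ^ 2 + 2 * (1 - r ^ 2)) := by
    rw [add_comm (β ^ 2)]; ring
  have hKD2 : K ^ 2 * (β ^ 2 + 2 * (1 - r ^ 2)) = K * (1 - r ^ 2) := by
    simp only [K]
    rw [add_comm (β ^ 2)]
    field_simp
  rw [Psi, Lam2_eq, Psi_numerator_eq, hA, sub_self, hKD2]
  simp only [zero_pow two_ne_zero, mul_zero, zero_mul, add_zero]
  rw [hKD, ← sq, ← phiRadicand, mul_div_assoc, Real.div_sqrt, Phi_eq]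

end Transition

section Orbits

variable {lam β : ℝ} {rbar : ℕ → ℝ}

lemma sq_le_one_of_Phi_orbit (hlam0 : 0 ≤ lam) (hlam1 : lam ≤ 1) (hβ : 0 < β ^ 2)
    (h0 : rbar 0 ^ 2 ≤ 1) (hS : ∀ t, rbar (t + 1) = Phi lam β (rbar t)) :
    ∀ t, rbar t ^ 2 ≤ 1
  | 0 => h0
  | t + 1 => hS t ▸ Phi_sq_le_one hlam0 hlam1 hβ (sq_le_one_of_Phi_orbit hlam0 hlam1 hβ h0 hS t)

lemma sq_le_sq_of_Psi_orbit (hlam : 0 ≤ lam) (hβ : 0 < β ^ 2) {K σ η r : ℕ → ℝ}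
    (hη : ∀ t, η t ^ 2 ≤ 1) (hrbar : ∀ t, rbar t ^ 2 ≤ 1) (h0 : r 0 = rbar 0)
    (hS : ∀ t, r (t + 1) = Psi lam β (r t) (K t) (η t) (σ t))
    (hbarS : ∀ t, rbar (t + 1) = Phi lam β (rbar t)) :
    ∀ t, r t ^ 2 ≤ rbar t ^ 2
  | 0 => h0 ▸ le_rfl
  | t + 1 => by
    rw [hS, hbarS]
    exact sq_Psi_le_sq_Phi hlam hβ (hη t)
      (sq_le_sq_of_Psi_orbit hlam hβ hη hrbar h0 hS hbarS t) (hrbar t)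

lemma eq_of_separated_Psi_orbit (hβ : 0 < β ^ 2) {η r : ℕ → ℝ} (hrbar : ∀ t, rbar t ^ 2 ≤ 1)
    (h0 : r 0 = rbar 0)
    (hS : ∀ t, r (t + 1) = Psi lam β (r t)
      ((1 - rbar t ^ 2) / (2 * (1 - rbar t ^ 2) + β ^ 2)) (η t) (rbar t))
    (hbarS : ∀ t, rbar (t + 1) = Phi lam β (rbar t)) :
    ∀ t, r t = rbar t
  | 0 => h0
  | t + 1 => by
    rw [hS, hbarS, eq_of_separated_Psi_orbit hβ hrbar h0 hS hbarS t,
      Psi_separated hβ (hrbar t)]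

end Orbits

section NetUtility

variable {C : ℝ → ℝ} {s η : ℝ}

lemma netUtility_le_sq (hη : η ∈ Ico (0 : ℝ) 1) (hCη : 0 ≤ C η) : η * s ^ 2 - C η ≤ s ^ 2 := by
  nlinarith [hη.2, sq_nonneg s]

lemma le_sSup_netUtility (hC : ∀ η ∈ Ico (0 : ℝ) 1, 0 ≤ C η) (hη : η ∈ Ico (0 : ℝ) 1) :
    η * s ^ 2 - C η ≤ sSup ((fun η => η * s ^ 2 - C η) '' Ico 0 1) :=
  le_csSup ⟨s ^ 2, forall_mem_image.2 fun η hη => netUtility_le_sq hη (hC η hη)⟩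
    (mem_image_of_mem _ hη)

lemma sSup_netUtility_le_sq (hC : ∀ η ∈ Ico (0 : ℝ) 1, 0 ≤ C η) : sSup ((fun η => η * s ^ 2 - C η) '' Ico 0 1) ≤ s ^ 2 :=
  csSup_le ((nonempty_Ico.2 one_pos).image _)
    (forall_mem_image.2 fun η hη => netUtility_le_sq hη (hC η hη))

lemma sSup_netUtility_nonneg (hC : ∀ η ∈ Ico (0 : ℝ) 1, 0 ≤ C η) (hC0 : C 0 = 0) :
    0 ≤ sSup ((fun η => η * s ^ 2 - C η) '' Ico 0 1) := by
  simpa [hC0] using le_sSup_netUtility (η := 0) (s := s) hC ⟨le_rfl, one_pos⟩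

end NetUtility

/-- If `f` is not summable then `∑' i, f i = 0`, which `0 ≤ g` dominates. -/
lemma tsum_le_tsum_of_nonneg_right {ι : Type*} {f g : ι → ℝ} (h : ∀ i, f i ≤ g i)
    (hg : Summable g) (hg0 : ∀ i, 0 ≤ g i) : ∑' i, f i ≤ ∑' i, g i := by
  by_cases hf : Summable f
  · exact hf.tsum_le_tsum h hg
  · rw [tsum_eq_zero_of_not_summable hf]
    exact tsum_nonneg hg0

lemma summable_pow_mul_of_mem_Icc {δ : ℝ} (hδ0 : 0 ≤ δ) (hδ1 : δ < 1) {v : ℕ → ℝ}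
    (hv : ∀ t, v t ∈ Icc (0 : ℝ) 1) : Summable fun t => δ ^ t * v t :=
  (summable_geometric_of_lt_one hδ0 hδ1).of_nonneg_of_le
    (fun t => mul_nonneg (pow_nonneg hδ0 t) (hv t).1)
    (fun t => mul_le_of_le_one_right (pow_nonneg hδ0 t) (hv t).2)

theorem separation_of_filtering_and_matching_general
    (lam β δ r0 : ℝ) (C : ℝ → ℝ)
    (hlam0 : 0 < lam) (hlam1 : lam < 1) (hβ : 0 < β ^ 2)
    (hδ0 : 0 < δ) (hδ1 : δ < 1)
    (hC0 : C 0 = 0) (hCnn : ∀ η ∈ Set.Ico (0 : ℝ) 1, 0 ≤ C η)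
    (hr00 : 0 < r0) (hr01 : r0 < 1)
    (V : ℝ → ℝ)
    (hV : ∀ s : ℝ, V s = sSup ((fun η => η * s ^ 2 - C η) '' Set.Ico 0 1))
    (rbar : ℕ → ℝ) (hrbar0 : rbar 0 = r0)
    (hrbarS : ∀ t, rbar (t + 1) = Phi lam β (rbar t)) :
    (∀ K σ η r : ℕ → ℝ,
        (∀ t, 0 < K t) → (∀ t, 0 < σ t) →
        (∀ t, η t ∈ Set.Ico (0 : ℝ) 1) →
        r 0 = r0 → (∀ t, r (t + 1) = Psi lam β (r t) (K t) (η t) (σ t)) →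
        (∑' t : ℕ, δ ^ t * (η t * (r t) ^ 2 - C (η t)))
          ≤ ∑' t : ℕ, δ ^ t * V (rbar t)) ∧
    (∀ ηs : ℕ → ℝ,
        (∀ t, ηs t ∈ Set.Ico (0 : ℝ) 1) →
        (∀ t, IsGreatest ((fun η => η * (rbar t) ^ 2 - C η) '' Set.Ico 0 1)
          (ηs t * (rbar t) ^ 2 - C (ηs t))) →
        (∀ r : ℕ → ℝ, r 0 = r0 →
          (∀ t, r (t + 1) = Psi lam β (r t)
            ((1 - (rbar t) ^ 2) / (2 * (1 - (rbar t) ^ 2) + β ^ 2))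
            (ηs t) (rbar t)) →
          ∀ t, r t = rbar t) ∧
        (∑' t : ℕ, δ ^ t * (ηs t * (rbar t) ^ 2 - C (ηs t)))
          = ∑' t : ℕ, δ ^ t * V (rbar t)) := by
  have hrbar : ∀ t, rbar t ^ 2 ≤ 1 :=
    sq_le_one_of_Phi_orbit hlam0.le hlam1.le hβ (by rw [hrbar0]; nlinarith) hrbarS
  have hV_mem : ∀ t, V (rbar t) ∈ Icc (0 : ℝ) 1 := fun t => by
    rw [hV]
    exact ⟨sSup_netUtility_nonneg hCnn hC0, (sSup_netUtility_le_sq hCnn).trans (hrbar t)⟩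
  refine ⟨fun K σ η r _ _ hη hr0 hrS => ?_, fun ηs _ hmax => ⟨fun r hr0 hrS => ?_, ?_⟩⟩
  · have hsq := sq_le_sq_of_Psi_orbit hlam0.le hβ (fun t => pow_le_one₀ (hη t).1 (hη t).2.le) hrbar
      (hr0.trans hrbar0.symm) hrS hrbarS
    refine tsum_le_tsum_of_nonneg_right (fun t => mul_le_mul_of_nonneg_left ?_ (by positivity))
      (summable_pow_mul_of_mem_Icc hδ0.le hδ1 hV_mem)
      (fun t => mul_nonneg (pow_nonneg hδ0.le t) (hV_mem t).1)
    calc η t * r t ^ 2 - C (η t) ≤ η t * rbar t ^ 2 - C (η t) :=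
          sub_le_sub_right (mul_le_mul_of_nonneg_left (hsq t) (hη t).1) _
      _ ≤ V (rbar t) := by rw [hV]; exact le_sSup_netUtility hCnn (hη t)
  · exact eq_of_separated_Psi_orbit hβ hrbar (hr0.trans hrbar0.symm) hrS hrbarS
  · exact tsum_congr fun t => by rw [hV, (hmax t).csSup_eq]

/-- **Separation of filtering and matching.** With `Ψ` the
transition function, `Φ` the invariant map, `C` a convex nondecreasing
sorting cost with `C(0) = 0`, `C ≥ 0` and `C(η) → ∞` as `η → 1⁻`, and
`V(r) = sup_{η ∈ [0,1)} (ηr² − C(η))`: for any admissible control sequences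
`K_t > 0`, `σ_t > 0`, `η_t ∈ [0,1)` with induced states
`r_{t+1} = Ψ(r_t, K_t, η_t, σ_t)` started at `r₀ ∈ (0,1)`, the discounted
welfare is at most `Σ δᵗ V(r̄_t)` where `r̄₀ = r₀`, `r̄_{t+1} = Φ(r̄_t)`;
and this bound is attained by the separated policy
`K_t = (1−r̄_t²)/(2(1−r̄_t²)+β²)`, `σ_t = r̄_t`, `η_t` any maximizer of
`η ↦ ηr̄_t² − C(η)`. -/
theorem separation_of_filtering_and_matching
    (lam β δ r0 : ℝ) (C : ℝ → ℝ)
    (hlam0 : 0 < lam) (hlam1 : lam < 1) (hβ : 0 < β ^ 2)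
    (hδ0 : 0 < δ) (hδ1 : δ < 1)
    (hconv : ConvexOn ℝ (Set.Ico 0 1) C) (hmono : MonotoneOn C (Set.Ico 0 1))
    (hC0 : C 0 = 0) (hCnn : ∀ η ∈ Set.Ico (0 : ℝ) 1, 0 ≤ C η)
    (hdiv : Filter.Tendsto C (nhdsWithin 1 (Set.Iio 1)) Filter.atTop)
    (hr00 : 0 < r0) (hr01 : r0 < 1)
    (V : ℝ → ℝ)
    (hV : ∀ s : ℝ, V s = sSup ((fun η => η * s ^ 2 - C η) '' Set.Ico 0 1))
    (rbar : ℕ → ℝ) (hrbar0 : rbar 0 = r0)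
    (hrbarS : ∀ t, rbar (t + 1) = Phi lam β (rbar t)) :
    (∀ K σ η r : ℕ → ℝ,
        (∀ t, 0 < K t) → (∀ t, 0 < σ t) →
        (∀ t, η t ∈ Set.Ico (0 : ℝ) 1) →
        r 0 = r0 → (∀ t, r (t + 1) = Psi lam β (r t) (K t) (η t) (σ t)) →
        (∑' t : ℕ, δ ^ t * (η t * (r t) ^ 2 - C (η t)))
          ≤ ∑' t : ℕ, δ ^ t * V (rbar t)) ∧
    (∀ ηs : ℕ → ℝ,
        (∀ t, ηs t ∈ Set.Ico (0 : ℝ) 1) →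
        (∀ t, IsGreatest ((fun η => η * (rbar t) ^ 2 - C η) '' Set.Ico 0 1)
          (ηs t * (rbar t) ^ 2 - C (ηs t))) →
        (∀ r : ℕ → ℝ, r 0 = r0 →
          (∀ t, r (t + 1) = Psi lam β (r t)
            ((1 - (rbar t) ^ 2) / (2 * (1 - (rbar t) ^ 2) + β ^ 2))
            (ηs t) (rbar t)) →
          ∀ t, r t = rbar t) ∧
        (∑' t : ℕ, δ ^ t * (ηs t * (rbar t) ^ 2 - C (ηs t)))
          = ∑' t : ℕ, δ ^ t * V (rbar t)) :=
  separation_of_filtering_and_matching_general lam β δ r0 C hlam0 hlam1 hβ hδ0 hδ1 hC0 hCnn hr00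
    hr01 V hV rbar hrbar0 hrbarS
end
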